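/- arXiv:2306.02713 — 2 statements merged into one kernel-verified Lean document; each statement's English description precedes it below -/
import Mathlib

section
/- Let f: D → D' be a homeomorphism of domains in ℝⁿ of Sobolev class W¹₁,loc with finite distortion, and let 1 < q < ∞. Suppose that the composition u ∘ f satisfies the chain rule pointwise a.e. and the change of variables formula holds. Then for every u ∈ C¹(D'), ∫_D |∇(u∘f)(x)|^q dm(x) ≤ ∫_{D'} |∇u(y)|^q Q_q(y) dm(y), where Q_q(y) = |Df(f⁻¹(y))|^q / |J(f⁻¹(y), f)| when f⁻¹(y) ∉ S ∪ Z and Q_q(y) = 0 otherwise. -/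
open MeasureTheory Set ENNReal Classical

noncomputable section

/-- the integral inverse Poletsky inequality (baseeq): for a Sobolev
homeomorphism f of finite distortion (with a.e. chain rule and change of variables),
∫_D |∇(u∘f)|^q dm ≤ ∫_{D'} |∇u|^q Q_q dm, with
Q_q(y) = |Df(f⁻¹(y))|^q / |J(f⁻¹(y),f)| off S ∪ Z and 0 on S ∪ Z. -/
theorem integral_inverse_poletsky {n : ℕ} (hn : 2 ≤ n) (q : ℝ) (hq : 1 < q)
    (D D' S Z : Set (EuclideanSpace ℝ (Fin n))) (hDo : IsOpen D) (hD'o : IsOpen D')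
    (f finv : EuclideanSpace ℝ (Fin n) → EuclideanSpace ℝ (Fin n))
    (Df : EuclideanSpace ℝ (Fin n) → (EuclideanSpace ℝ (Fin n) →L[ℝ] EuclideanSpace ℝ (Fin n)))
    (J : EuclideanSpace ℝ (Fin n) → ℝ) (hJ : ∀ x, J x = (Df x).det)
    -- f is a homeomorphism of D onto D' with inverse finv
    (hbij : Set.BijOn f D D') (hfc : ContinuousOn f D) (hfinvc : ContinuousOn finv D')
    (hinv : Set.InvOn finv f D D')
    -- f is of Sobolev class W¹₁,loc with formal differential Df
    (hsob : LocallyIntegrableOn (fun x => ‖Df x‖) D)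
    (hdiff : ∀ᵐ x ∂(volume.restrict D), HasFDerivAt f (Df x) x)
    -- S is the null set outside of which f has the Luzin N-property, Z = {J = 0}
    (hS : S ⊆ D) (hSnull : volume S = 0)
    (hZ : Z = {x ∈ D | J x = 0})
    -- f has finite distortion
    (hfd : ∀ᵐ x ∂(volume.restrict Z), ‖Df x‖ = 0)
    -- the test function u ∈ C¹(D')
    (u : EuclideanSpace ℝ (Fin n) → ℝ) (hu : ContDiff ℝ 1 u)
    -- the chain rule holds pointwise a.e.
    (hchain : ∀ᵐ x ∂(volume.restrict D),
      ‖gradient (u ∘ f) x‖ ≤ ‖gradient u (f x)‖ * ‖Df x‖)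
    -- the change of variables formula holds
    (hcv : ∀ g : EuclideanSpace ℝ (Fin n) → ℝ≥0∞, Measurable g →
      ∫⁻ x in D \ S, g (f x) * ENNReal.ofReal |J x| = ∫⁻ y in f '' (D \ S), g y)
    (Qq : EuclideanSpace ℝ (Fin n) → ℝ≥0∞)
    (hQq : ∀ y ∈ D', Qq y =
      if finv y ∈ S ∪ Z then 0
      else ENNReal.ofReal (‖Df (finv y)‖ ^ q / |J (finv y)|)) :
    ∫⁻ x in D, ENNReal.ofReal ‖gradient (u ∘ f) x‖ ^ q ≤
      ∫⁻ y in D', ENNReal.ofReal ‖gradient u y‖ ^ q * Qq y := by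
  classical
  have hq0 : (0:ℝ) ≤ q := le_of_lt (lt_trans zero_lt_one hq)
  have hDm : MeasurableSet D := hDo.measurableSet
  have hD'm : MeasurableSet D' := hD'o.measurableSet
  -- a.e. properties on D
  have hfde : ∀ᵐ x ∂(volume.restrict D), fderiv ℝ f x = Df x :=
    hdiff.mono fun x hx => hx.fderiv
  have hZae : ∀ᵐ x ∂(volume.restrict D), x ∈ Z → ‖Df x‖ = 0 := by
    have hZsub : {x | x ∈ Z ∧ ¬ ‖Df x‖ = 0} ⊆ Z := fun x hx => hx.1
    have h0 : volume {x | x ∈ Z ∧ ¬ ‖Df x‖ = 0} = 0 := by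
      refine le_antisymm ?_ zero_le
      calc volume {x | x ∈ Z ∧ ¬ ‖Df x‖ = 0}
          = volume.restrict Z {x | x ∈ Z ∧ ¬ ‖Df x‖ = 0} :=
            (Measure.restrict_eq_self volume hZsub).symm
        _ ≤ volume.restrict Z {x | ¬ ‖Df x‖ = 0} := measure_mono fun x hx => hx.2
        _ = 0 := ae_iff.mp hfd
    refine ae_iff.mpr (le_antisymm ?_ zero_le)
    calc volume.restrict D {x | ¬ (x ∈ Z → ‖Df x‖ = 0)}
        ≤ volume {x | ¬ (x ∈ Z → ‖Df x‖ = 0)} := Measure.restrict_le_self _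
      _ = 0 := by
          refine measure_mono_null (fun x hx => ?_) h0
          simp only [Set.mem_setOf_eq] at hx ⊢
          push_neg at hx; exact hx
  have hPae : ∀ᵐ x ∂(volume.restrict D),
      fderiv ℝ f x = Df x ∧ ‖gradient (u ∘ f) x‖ ≤ ‖gradient u (f x)‖ * ‖Df x‖ ∧
        (x ∈ Z → ‖Df x‖ = 0) := hfde.and (hchain.and hZae)
  -- bad set and its measurable null hull
  set bad : Set (EuclideanSpace ℝ (Fin n)) :=
    ({x | ¬ (fderiv ℝ f x = Df x ∧ ‖gradient (u ∘ f) x‖ ≤ ‖gradient u (f x)‖ * ‖Df x‖ ∧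
        (x ∈ Z → ‖Df x‖ = 0))} ∩ D) ∪ S with hbaddef
  have hbadnull : volume bad = 0 := by
    refine measure_union_null ?_ hSnull
    rw [← Measure.restrict_apply' hDm]
    exact ae_iff.mp hPae
  set W : Set (EuclideanSpace ℝ (Fin n)) := toMeasurable volume bad with hWdef
  have hWm : MeasurableSet W := measurableSet_toMeasurable _ _
  have hWnull : volume W = 0 := by rw [hWdef, measure_toMeasurable]; exact hbadnull
  have hgoodP : ∀ x, x ∈ D → x ∉ W →
      fderiv ℝ f x = Df x ∧ ‖gradient (u ∘ f) x‖ ≤ ‖gradient u (f x)‖ * ‖Df x‖ ∧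
        (x ∈ Z → ‖Df x‖ = 0) := by
    intro x hxD hxW
    by_contra hc
    exact hxW (subset_toMeasurable _ _ (Or.inl ⟨hc, hxD⟩))
  have hgoodS : ∀ x, x ∉ W → x ∉ S := fun x hxW hxS =>
    hxW (subset_toMeasurable _ _ (Or.inr hxS))
  -- the auxiliary measurable integrand
  set gA : EuclideanSpace ℝ (Fin n) → ℝ≥0∞ := fun x =>
    if (fderiv ℝ f x).det = 0 ∨ x ∈ W then 0
    else ENNReal.ofReal (‖fderiv ℝ f x‖ ^ q / |(fderiv ℝ f x).det|) with hgAdef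
  have hgAm : Measurable gA := by
    refine Measurable.ite ?_ measurable_const ?_
    · refine MeasurableSet.union ?_ hWm
      exact (ContinuousLinearMap.continuous_det.measurable.comp
        (measurable_fderiv ℝ f)) (measurableSet_singleton (0:ℝ))
    · refine ENNReal.measurable_ofReal.comp ?_
      refine Measurable.div ?_ ?_
      · exact ((Real.continuous_rpow_const hq0).comp continuous_norm).measurable.comp
          (measurable_fderiv ℝ f)
      · exact (continuous_abs.comp ContinuousLinearMap.continuous_det).measurable.comp
          (measurable_fderiv ℝ f)
  -- gradient of u is continuous
  have hgradc : Continuous (gradient u) := by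
    have h1 : Continuous (fderiv ℝ u) := hu.continuous_fderiv one_ne_zero
    have : gradient u = fun x => (InnerProductSpace.toDual ℝ _).symm (fderiv ℝ u x) := rfl
    rw [this]
    exact (InnerProductSpace.toDual ℝ _).symm.continuous.comp h1
  set G : EuclideanSpace ℝ (Fin n) → ℝ≥0∞ :=
    fun y => ENNReal.ofReal ‖gradient u y‖ ^ q with hGdef
  have hGm : Measurable G :=
    (ENNReal.continuous_rpow_const.comp
      (ENNReal.continuous_ofReal.comp hgradc.norm)).measurable
  -- g0, the measurable test function for the change of variables
  set h0 : D' → ℝ≥0∞ := fun y => G y.1 * gA (finv y.1) with hh0def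
  have hh0m : Measurable h0 := by
    refine (hGm.comp measurable_subtype_coe).mul ?_
    exact hgAm.comp (continuousOn_iff_continuous_restrict.mp hfinvc).measurable
  set g0 : EuclideanSpace ℝ (Fin n) → ℝ≥0∞ :=
    Function.extend Subtype.val h0 (fun _ => 0) with hg0def
  have hgA_apply : ∀ x, gA x =
    (if (fderiv ℝ f x).det = 0 ∨ x ∈ W then 0
     else ENNReal.ofReal (‖fderiv ℝ f x‖ ^ q / |(fderiv ℝ f x).det|)) := fun _ => rfl
  have hg0m : Measurable g0 :=
    (MeasurableEmbedding.subtype_coe hD'm).measurable_extend hh0m measurable_const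
  have hg0eval : ∀ y, ∀ hy : y ∈ D', g0 y = G y * gA (finv y) := by
    intro y hy
    have : g0 ((⟨y, hy⟩ : D').1) = h0 ⟨y, hy⟩ :=
      Subtype.val_injective.extend_apply h0 (fun _ => 0) ⟨y, hy⟩
    simpa [hh0def] using this
  -- Step 1: bound the LHS by the transported integral
  have key1 : ∫⁻ x in D, ENNReal.ofReal ‖gradient (u ∘ f) x‖ ^ q
      ≤ ∫⁻ x in D \ S, g0 (f x) * ENNReal.ofReal |J x| := by
    have hres : volume.restrict (D \ S) = volume.restrict D :=
      Measure.restrict_congr_set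
        (diff_ae_eq_self.mpr (measure_mono_null inter_subset_right hSnull))
    rw [← hres]
    refine lintegral_mono_ae ?_
    have hWae : ∀ᵐ x ∂(volume.restrict (D \ S)), x ∉ W := by
      refine Filter.Eventually.filter_mono (ae_mono Measure.restrict_le_self) ?_
      exact (measure_eq_zero_iff_ae_notMem.mp hWnull)
    have hPae' : ∀ᵐ x ∂(volume.restrict (D \ S)),
        fderiv ℝ f x = Df x ∧ ‖gradient (u ∘ f) x‖ ≤ ‖gradient u (f x)‖ * ‖Df x‖ ∧
          (x ∈ Z → ‖Df x‖ = 0) := by rw [hres]; exact hPae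
    have hmem : ∀ᵐ x ∂(volume.restrict (D \ S)), x ∈ D := by
      rw [hres]; exact ae_restrict_mem hDm
    filter_upwards [hWae, hPae', hmem] with x hxW hP hxD
    obtain ⟨hfdx, hch, hZ0⟩ := hP
    have hxD' : f x ∈ D' := hbij.mapsTo hxD
    have hfif : finv (f x) = x := hinv.1 hxD
    rw [hg0eval (f x) hxD', hfif]
    by_cases hJx : J x = 0
    · have hxZ : x ∈ Z := by rw [hZ]; exact ⟨hxD, hJx⟩
      have hDf0 : ‖Df x‖ = 0 := hZ0 hxZ
      have hg0' : ‖gradient (u ∘ f) x‖ = 0 := by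
        refine le_antisymm ?_ (norm_nonneg _)
        calc ‖gradient (u ∘ f) x‖ ≤ ‖gradient u (f x)‖ * ‖Df x‖ := hch
          _ = 0 := by rw [hDf0, mul_zero]
      rw [hg0']
      simp [ENNReal.zero_rpow_of_pos (lt_trans zero_lt_one hq)]
    · have hdet : (fderiv ℝ f x).det = J x := by rw [hfdx, ← hJ]
      have hgtv : gA x = ENNReal.ofReal (‖Df x‖ ^ q / |J x|) := by
        rw [hgA_apply]
        rw [if_neg (by push_neg; exact ⟨by rw [hdet]; exact hJx, hxW⟩), hfdx, ← hJ]
      rw [hgtv]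
      show ENNReal.ofReal ‖gradient u (f x)‖ ^ q * ENNReal.ofReal (‖Df x‖ ^ q / |J x|) *
          ENNReal.ofReal |J x| ≥ _
      have habs : 0 < |J x| := abs_pos.mpr hJx
      rw [ENNReal.ofReal_rpow_of_nonneg (norm_nonneg _) hq0,
          ENNReal.ofReal_rpow_of_nonneg (norm_nonneg _) hq0,
          ← ENNReal.ofReal_mul (Real.rpow_nonneg (norm_nonneg _) q),
          ← ENNReal.ofReal_mul (by positivity)]
      refine ENNReal.ofReal_le_ofReal ?_
      calc ‖gradient (u ∘ f) x‖ ^ q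
          ≤ (‖gradient u (f x)‖ * ‖Df x‖) ^ q :=
            Real.rpow_le_rpow (norm_nonneg _) hch hq0
        _ = ‖gradient u (f x)‖ ^ q * ‖Df x‖ ^ q :=
            Real.mul_rpow (norm_nonneg _) (norm_nonneg _)
        _ = ‖gradient u (f x)‖ ^ q * (‖Df x‖ ^ q / |J x|) * |J x| := by
            rw [mul_assoc, div_mul_cancel₀ _ (ne_of_gt habs)]
  -- Step 2: change of variables
  have key2 : ∫⁻ x in D \ S, g0 (f x) * ENNReal.ofReal |J x|
      = ∫⁻ y in f '' (D \ S), g0 y := hcv g0 hg0m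
  -- Step 3: bound the transported integral by the RHS
  have himg : f '' (D \ S) ⊆ D' := by
    rw [← hbij.image_eq]; exact image_mono diff_subset
  have key3 : ∫⁻ y in f '' (D \ S), g0 y
      ≤ ∫⁻ y in D', ENNReal.ofReal ‖gradient u y‖ ^ q * Qq y := by
    refine le_trans (lintegral_mono' (Measure.restrict_mono himg le_rfl) le_rfl) ?_
    refine lintegral_mono_ae ?_
    filter_upwards [ae_restrict_mem hD'm] with y hy
    rw [hg0eval y hy, hQq y hy]
    refine mul_le_mul_right ?_ _
    obtain ⟨x, hxD, hfx⟩ := hbij.surjOn hy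
    have hfinv : finv y = x := by rw [← hfx]; exact hinv.1 hxD
    have hxDmem : finv y ∈ D := by rw [hfinv]; exact hxD
    by_cases hxW : finv y ∈ W
    · rw [hgA_apply, if_pos (Or.inr hxW)]
      exact zero_le
    · have hPx := hgoodP (finv y) hxDmem hxW
      have hxS : finv y ∉ S := hgoodS (finv y) hxW
      have hdet : (fderiv ℝ f (finv y)).det = J (finv y) := by rw [hPx.1, ← hJ]
      by_cases hxZ : finv y ∈ Z
      · have hJ0 : J (finv y) = 0 := by rw [hZ] at hxZ; exact hxZ.2
        rw [hgA_apply, if_pos (Or.inl (by rw [hdet]; exact hJ0))]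
        exact zero_le
      · have hJne : J (finv y) ≠ 0 := fun hc => hxZ (by rw [hZ]; exact ⟨hxDmem, hc⟩)
        rw [if_neg (by simp [hxS, hxZ])]
        rw [hgA_apply]
        rw [if_neg (by push_neg; exact ⟨by rw [hdet]; exact hJne, hxW⟩), hPx.1, ← hJ]
  calc ∫⁻ x in D, ENNReal.ofReal ‖gradient (u ∘ f) x‖ ^ q
      ≤ ∫⁻ x in D \ S, g0 (f x) * ENNReal.ofReal |J x| := key1
    _ = ∫⁻ y in f '' (D \ S), g0 y := key2
    _ ≤ ∫⁻ y in D', ENNReal.ofReal ‖gradient u y‖ ^ q * Qq y := key3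
end
end

section
/- Let 1 < q < ∞ and let f: D → D' be a homeomorphism such that cap_q(E,F,D) ≤ cap_{q,Q}(f(E), f(F), f(D)) for all compacta E, F ⊂ D, and assume the weighted capacity equals the weighted modulus: cap_{q,Q}(f(E),f(F),f(D)) = inf_{ρ* ∈ adm Γ(f(E),f(F),f(D))} ∫_{f(D)} ρ*^q Q dm. Assume also the Hesse equality cap_q(E,F,D) = M_q(Γ(E,F,D)). Then for every y₀ ∈ f(D), all compacta E ⊂ f⁻¹(B̄(y₀,r₁)), F ⊂ f⁻¹(f(D)\B(y₀,r₂)) with 0 < r₁ < r₂, and every measurable η: (r₁,r₂) → [0,∞] with ∫_{r₁}^{r₂} η ≥ 1, M_q(Γ(E,F,D)) ≤ ∫_{A(y₀,r₁,r₂) ∩ f(D)} Q(y) η^q(|y−y₀|) dm(y). -/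
open MeasureTheory Metric Set ENNReal

noncomputable section

/-- The line integral ∫_γ ρ |dx| of a Borel density along a curve (parametrized over [0,1]). -/
def lineIntegral {n : ℕ} (ρ : EuclideanSpace ℝ (Fin n) → ℝ≥0∞)
    (γ : ℝ → EuclideanSpace ℝ (Fin n)) : ℝ≥0∞ :=
  ∫⁻ t in Set.Ioo (0 : ℝ) 1, ρ (γ t) * ENNReal.ofReal ‖deriv γ t‖

/-- Admissibility of a density for a family of paths. -/
def AdmissibleFor {n : ℕ} (ρ : EuclideanSpace ℝ (Fin n) → ℝ≥0∞)
    (Γ : Set (ℝ → EuclideanSpace ℝ (Fin n))) : Prop :=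
  Measurable ρ ∧ ∀ γ ∈ Γ, 1 ≤ lineIntegral ρ γ

/-- The q-modulus M_q(Γ) of a family of paths, densities integrated over D. -/
def modulus {n : ℕ} (q : ℝ) (Γ : Set (ℝ → EuclideanSpace ℝ (Fin n)))
    (D : Set (EuclideanSpace ℝ (Fin n))) : ℝ≥0∞ :=
  ⨅ (ρ : EuclideanSpace ℝ (Fin n) → ℝ≥0∞) (_ : AdmissibleFor ρ Γ), ∫⁻ x in D, ρ x ^ q

/-- The weighted q-modulus M_{q,Q}(Γ) with weight Q. -/
def wmodulus {n : ℕ} (q : ℝ) (Q : EuclideanSpace ℝ (Fin n) → ℝ≥0∞)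
    (Γ : Set (ℝ → EuclideanSpace ℝ (Fin n))) (D : Set (EuclideanSpace ℝ (Fin n))) : ℝ≥0∞ :=
  ⨅ (ρ : EuclideanSpace ℝ (Fin n) → ℝ≥0∞) (_ : AdmissibleFor ρ Γ),
    ∫⁻ x in D, ρ x ^ q * Q x

/-- Γ(E,F,D): the family of paths joining E and F inside D. -/
def pathFamily {n : ℕ} (E F D : Set (EuclideanSpace ℝ (Fin n))) :
    Set (ℝ → EuclideanSpace ℝ (Fin n)) :=
  {γ | ContinuousOn γ (Set.Icc 0 1) ∧ γ 0 ∈ E ∧ γ 1 ∈ F ∧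
    ∀ t ∈ Set.Ioo (0 : ℝ) 1, γ t ∈ D}

/-- Admissible function for the condenser (A,B) relative to Ω. -/
def CondAdmissible {n : ℕ} (Ω A B : Set (EuclideanSpace ℝ (Fin n)))
    (u : EuclideanSpace ℝ (Fin n) → ℝ) : Prop :=
  Continuous u ∧
    (∃ x, A ∩ Ω ⊆ connectedComponentIn (interior {y | u y = 0}) x) ∧
    (∃ x, B ∩ Ω ⊆ connectedComponentIn (interior {y | u y = 1}) x)

/-- The variational q-capacity of the condenser (A,B) relative to Ω. -/
def capacity {n : ℕ} (q : ℝ) (A B Ω : Set (EuclideanSpace ℝ (Fin n))) : ℝ≥0∞ :=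
  ⨅ (u : EuclideanSpace ℝ (Fin n) → ℝ) (_ : CondAdmissible Ω A B u),
    ∫⁻ x in Ω, ENNReal.ofReal ‖gradient u x‖ ^ q

/-- The weighted q-capacity cap_{q,Q} of the condenser (A,B) relative to Ω. -/
def wcapacity {n : ℕ} (q : ℝ) (Q : EuclideanSpace ℝ (Fin n) → ℝ≥0∞)
    (A B Ω : Set (EuclideanSpace ℝ (Fin n))) : ℝ≥0∞ :=
  ⨅ (u : EuclideanSpace ℝ (Fin n) → ℝ) (_ : CondAdmissible Ω A B u),
    ∫⁻ x in Ω, Q x * ENNReal.ofReal ‖gradient u x‖ ^ q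


open scoped NNReal

/-! ### Auxiliary lemmas -/

private lemma min_one_lip (x y : ℝ) : |min 1 x - min 1 y| ≤ |x - y| := by
  rw [abs_sub_le_iff]
  constructor
  · rcases le_total x y with h | h
    · have h1 : min 1 x ≤ min 1 y := min_le_min le_rfl h
      have h2 : (0:ℝ) ≤ |x - y| := abs_nonneg _
      linarith
    · have h1 : min 1 x - min 1 y ≤ x - y := by
        rcases le_total (1:ℝ) y with h2 | h2
        · have h3 : min 1 x ≤ 1 := min_le_left _ _
          rw [min_eq_left h2]
          have : (1:ℝ) ≤ x := le_trans h2 h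
          linarith
        · rw [min_eq_right h2]
          have h3 : min 1 x ≤ x := min_le_right _ _
          linarith
      have h2 : x - y ≤ |x - y| := le_abs_self _
      linarith
  · rcases le_total y x with h | h
    · have h1 : min 1 y ≤ min 1 x := min_le_min le_rfl h
      have h2 : (0:ℝ) ≤ |x - y| := abs_nonneg _
      linarith
    · have h1 : min 1 y - min 1 x ≤ y - x := by
        rcases le_total (1:ℝ) x with h2 | h2
        · have h3 : min 1 y ≤ 1 := min_le_left _ _
          rw [min_eq_left h2]
          have : (1:ℝ) ≤ y := le_trans h2 h
          linarith
        · rw [min_eq_right h2]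
          have h3 : min 1 y ≤ y := min_le_right _ _
          linarith
      have h2 : y - x ≤ |x - y| := by rw [abs_sub_comm]; exact le_abs_self _
      linarith

private lemma self_le_iSup_min_nat (a : ℝ≥0∞) : a ≤ ⨆ k : ℕ, min a (k : ℝ≥0∞) := by
  rcases eq_or_ne a ⊤ with rfl | h
  · have h1 : ∀ k : ℕ, min (⊤ : ℝ≥0∞) (k : ℝ≥0∞) = (k : ℝ≥0∞) := fun k => min_eq_right le_top
    simp only [h1, ENNReal.iSup_natCast]
    exact le_rfl
  · obtain ⟨m, hm⟩ := ENNReal.exists_nat_gt h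
    calc a = min a (m : ℝ≥0∞) := (min_eq_left hm.le).symm
    _ ≤ ⨆ k : ℕ, min a (k : ℝ≥0∞) := le_iSup (fun k : ℕ => min a (k : ℝ≥0∞)) m

private lemma isPreconnected_far {n : ℕ} (hn : 2 ≤ n)
    (y₀ : EuclideanSpace ℝ (Fin n)) {R : ℝ} (hR : 0 ≤ R) :
    IsPreconnected {y : EuclideanSpace ℝ (Fin n) | R < dist y y₀} := by
  have hrank : 1 < Module.rank ℝ (EuclideanSpace ℝ (Fin n)) := by
    have h1 : Module.finrank ℝ (EuclideanSpace ℝ (Fin n)) = n := finrank_euclideanSpace_fin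
    have h2 : ((Module.finrank ℝ (EuclideanSpace ℝ (Fin n)) : Cardinal)) =
        Module.rank ℝ (EuclideanSpace ℝ (Fin n)) := Module.finrank_eq_rank ℝ _
    have h3 : (1:ℕ) < n := by omega
    rw [← h2, h1]
    exact_mod_cast h3
  have hsph : IsConnected (sphere (0 : EuclideanSpace ℝ (Fin n)) 1) :=
    isConnected_sphere hrank 0 zero_le_one
  have himg : {y : EuclideanSpace ℝ (Fin n) | R < dist y y₀} =
      (fun p : ℝ × EuclideanSpace ℝ (Fin n) => y₀ + p.1 • p.2) ''
        ((Ioi R) ×ˢ (sphere (0 : EuclideanSpace ℝ (Fin n)) 1)) := by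
    ext y
    constructor
    · intro hy
      have hy' : R < dist y y₀ := hy
      have hpos : 0 < dist y y₀ := lt_of_le_of_lt hR hy'
      have hne : y - y₀ ≠ 0 := by
        intro hz
        rw [sub_eq_zero] at hz
        rw [hz, dist_self] at hpos
        exact lt_irrefl _ hpos
      have hnorm : ‖y - y₀‖ = dist y y₀ := (dist_eq_norm y y₀).symm
      refine ⟨(dist y y₀, (dist y y₀)⁻¹ • (y - y₀)), ⟨hy', ?_⟩, ?_⟩
      · rw [mem_sphere_zero_iff_norm, norm_smul, norm_inv, Real.norm_eq_abs,
          abs_of_pos hpos, hnorm]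
        field_simp
      · show y₀ + dist y y₀ • ((dist y y₀)⁻¹ • (y - y₀)) = y
        rw [smul_smul, mul_inv_cancel₀ hpos.ne', one_smul]
        abel
    · rintro ⟨⟨t, v⟩, ⟨ht, hv⟩, rfl⟩
      have hv' : ‖v‖ = 1 := mem_sphere_zero_iff_norm.mp hv
      show R < dist (y₀ + t • v) y₀
      rw [dist_self_add_left, norm_smul, hv', Real.norm_eq_abs, mul_one,
        abs_of_pos (lt_of_le_of_lt hR ht)]
      exact ht
  rw [himg]
  exact ((isPreconnected_Ioi.prod hsph.isPreconnected).image _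
    ((continuous_const.add (continuous_fst.smul continuous_snd)).continuousOn))

/-- Key construction: the weighted capacity is bounded by the weighted integral of
`Q · η(dist)^q` over the annulus, up to a factor coming from an `ε` of slack. -/
private lemma wcapacity_le_annulus {n : ℕ} (hn : 2 ≤ n) (q : ℝ) (hq : 1 < q)
    (Q : EuclideanSpace ℝ (Fin n) → ℝ≥0∞)
    (A B Ω : Set (EuclideanSpace ℝ (Fin n))) (y₀ : EuclideanSpace ℝ (Fin n))
    (r₁ r₂ : ℝ) (hr₁ : 0 < r₁) (hr₁₂ : r₁ < r₂)
    (hA : A ⊆ Metric.closedBall y₀ r₁) (hB : B ⊆ (Metric.ball y₀ r₂)ᶜ)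
    (η : ℝ → ℝ≥0∞) (hη : Measurable η) (hint : 1 ≤ ∫⁻ r in Set.Ioo r₁ r₂, η r)
    (ε : ℝ) (hε0 : 0 < ε) (hε1 : ε < 1) :
    wcapacity q Q A B Ω ≤ ENNReal.ofReal (1 - ε) ^ (-q) *
      ∫⁻ y in (Metric.ball y₀ r₂ \ Metric.closedBall y₀ r₁) ∩ Ω,
        Q y * (η (dist y y₀)) ^ q := by
  have hq0 : 0 < q := lt_trans one_pos hq
  -- Step 1: truncation and shrinking
  set Fk : ℕ → ℝ → ℝ≥0∞ := fun k t =>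
    (Set.Ioo (r₁ + 1/((k:ℝ)+1)) (r₂ - 1/((k:ℝ)+1))).indicator (fun t => min (η t) (k : ℝ≥0∞)) t
    with hFk
  have hFk_meas : ∀ k, Measurable (Fk k) := fun k =>
    (hη.min measurable_const).indicator measurableSet_Ioo
  have hFk_mono : Monotone Fk := by
    intro k k' hk t
    have hsub : Set.Ioo (r₁ + 1/((k:ℝ)+1)) (r₂ - 1/((k:ℝ)+1)) ⊆
        Set.Ioo (r₁ + 1/((k':ℝ)+1)) (r₂ - 1/((k':ℝ)+1)) := by
      have h1 : 1/((k':ℝ)+1) ≤ 1/((k:ℝ)+1) := by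
        apply one_div_le_one_div_of_le
        · positivity
        · have : (k:ℝ) ≤ (k':ℝ) := by exact_mod_cast hk
          linarith
      exact Set.Ioo_subset_Ioo (by linarith) (by linarith)
    calc Fk k t ≤ (Set.Ioo (r₁ + 1/((k:ℝ)+1)) (r₂ - 1/((k:ℝ)+1))).indicator
          (fun t => min (η t) (k' : ℝ≥0∞)) t := by
          apply Set.indicator_le_indicator
          exact min_le_min le_rfl (by exact_mod_cast hk)
      _ ≤ Fk k' t := Set.indicator_le_indicator_of_subset hsub (fun t => zero_le) t
  have hpt : ∀ t, (Set.Ioo r₁ r₂).indicator η t ≤ ⨆ k, Fk k t := by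
    intro t
    by_cases ht : t ∈ Set.Ioo r₁ r₂
    · rw [Set.indicator_of_mem ht]
      obtain ⟨k₀, hk₀⟩ := exists_nat_one_div_lt (show (0:ℝ) < min (t - r₁) (r₂ - t) by
        simp only [lt_min_iff]; exact ⟨by linarith [ht.1], by linarith [ht.2]⟩)
      have hk₀' : 1/((k₀:ℝ)+1) < min (t - r₁) (r₂ - t) := hk₀
      have hmem : ∀ m : ℕ, k₀ ≤ m → t ∈ Set.Ioo (r₁ + 1/((m:ℝ)+1)) (r₂ - 1/((m:ℝ)+1)) := by
        intro m hm
        have h1 : 1/((m:ℝ)+1) ≤ 1/((k₀:ℝ)+1) := by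
          apply one_div_le_one_div_of_le
          · positivity
          · have : (k₀:ℝ) ≤ (m:ℝ) := by exact_mod_cast hm
            linarith
        have h2 : 1/((m:ℝ)+1) < t - r₁ := lt_of_le_of_lt h1 (lt_of_lt_of_le hk₀' (min_le_left _ _))
        have h3 : 1/((m:ℝ)+1) < r₂ - t := lt_of_le_of_lt h1 (lt_of_lt_of_le hk₀' (min_le_right _ _))
        exact ⟨by linarith, by linarith⟩
      calc η t ≤ ⨆ m : ℕ, min (η t) (m : ℝ≥0∞) := self_le_iSup_min_nat _
        _ ≤ ⨆ k, Fk k t := by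
            apply iSup_le
            intro m
            calc min (η t) (m : ℝ≥0∞) ≤ min (η t) ((max m k₀ : ℕ) : ℝ≥0∞) :=
                min_le_min le_rfl (by exact_mod_cast le_max_left m k₀)
              _ = Fk (max m k₀) t := by
                  simp only [hFk]
                  rw [Set.indicator_of_mem (hmem _ (le_max_right m k₀))]
              _ ≤ ⨆ k, Fk k t := le_iSup (fun k => Fk k t) (max m k₀)
    · rw [Set.indicator_of_notMem ht]
      exact zero_le
  have hsup : (1:ℝ≥0∞) ≤ ⨆ k, ∫⁻ t, Fk k t := by
    calc (1:ℝ≥0∞) ≤ ∫⁻ r in Set.Ioo r₁ r₂, η r := hint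
      _ = ∫⁻ t, (Set.Ioo r₁ r₂).indicator η t := (lintegral_indicator measurableSet_Ioo η).symm
      _ ≤ ∫⁻ t, ⨆ k, Fk k t := lintegral_mono hpt
      _ = ⨆ k, ∫⁻ t, Fk k t := lintegral_iSup hFk_meas hFk_mono
  have hlt1 : ENNReal.ofReal (1 - ε/2) < ⨆ k, ∫⁻ t, Fk k t :=
    lt_of_lt_of_le (by
      rw [← ENNReal.ofReal_one]
      exact ENNReal.ofReal_lt_ofReal_iff_of_nonneg (by linarith) |>.mpr (by linarith)) hsup
  obtain ⟨k, hk⟩ := lt_iSup_iff.mp hlt1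
  set a := r₁ + 1/((k:ℝ)+1) with ha_def
  set b := r₂ - 1/((k:ℝ)+1) with hb_def
  have ha_pos : 0 < a := by have : 0 < 1/((k:ℝ)+1) := by positivity
                            simp only [ha_def]; linarith
  have har₁ : r₁ < a := by have : 0 < 1/((k:ℝ)+1) := by positivity
                           simp only [ha_def]; linarith
  have hbr₂ : b < r₂ := by have : 0 < 1/((k:ℝ)+1) := by positivity
                           simp only [hb_def]; linarith
  -- Step 2: Vitali–Carathéodory USC minorant
  set fnn : ℝ → ℝ≥0 := fun t =>
    (Set.Ioo a b).indicator (fun t => (min (η t) (k : ℝ≥0∞)).toNNReal) t with hfnn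
  have hmin_ne_top : ∀ t, min (η t) (k : ℝ≥0∞) ≠ ⊤ :=
    fun t => ne_top_of_le_ne_top (ENNReal.natCast_ne_top k) (min_le_right _ _)
  have hfnn_eq : ∀ t, ((fnn t : ℝ≥0∞)) = Fk k t := by
    intro t
    by_cases ht : t ∈ Set.Ioo a b
    · rw [hfnn]
      simp only [Set.indicator_of_mem (show t ∈ Set.Ioo (r₁ + 1/((k:ℝ)+1)) (r₂ - 1/((k:ℝ)+1)) from ht), hFk, ha_def, hb_def]
      exact ENNReal.coe_toNNReal (hmin_ne_top t)
    · rw [hfnn]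
      simp only [Set.indicator_of_notMem (show t ∉ Set.Ioo (r₁ + 1/((k:ℝ)+1)) (r₂ - 1/((k:ℝ)+1)) from ht), hFk, ha_def, hb_def]
      simp
  have hfnn_int : (∫⁻ t, (fnn t : ℝ≥0∞)) ≠ ⊤ := by
    have h1 : (∫⁻ t, (fnn t : ℝ≥0∞)) ≤ (k : ℝ≥0∞) * volume (Set.Ioo a b) := by
      calc (∫⁻ t, (fnn t : ℝ≥0∞)) = ∫⁻ t, Fk k t := by
            apply lintegral_congr; exact hfnn_eq
        _ ≤ ∫⁻ t, (Set.Ioo a b).indicator (fun _ => (k : ℝ≥0∞)) t := by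
            apply lintegral_mono
            intro t
            have heq : Fk k t = (Set.Ioo a b).indicator (fun t => min (η t) (k:ℝ≥0∞)) t := by
              simp only [hFk, ha_def, hb_def]
            rw [heq]
            exact Set.indicator_le_indicator (min_le_right _ _)
        _ = ∫⁻ t in Set.Ioo a b, (k : ℝ≥0∞) := lintegral_indicator measurableSet_Ioo _
        _ = (k : ℝ≥0∞) * volume (Set.Ioo a b) := by rw [setLIntegral_const]
    refine ne_top_of_le_ne_top ?_ h1
    exact ENNReal.mul_ne_top (ENNReal.natCast_ne_top k)
      (by rw [Real.volume_Ioo]; exact ENNReal.ofReal_ne_top)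
  obtain ⟨g, hg_le, hg_usc, hg_int⟩ :=
    exists_upperSemicontinuous_le_lintegral_le (μ := volume) fnn hfnn_int
      (show ENNReal.ofReal (ε/2) ≠ 0 by
        rw [ne_eq, ENNReal.ofReal_eq_zero, not_le]; linarith)
  have hFk_int_eq : (∫⁻ t, (fnn t : ℝ≥0∞)) = ∫⁻ t, Fk k t := lintegral_congr hfnn_eq
  -- basic facts about g
  have hg_zero : ∀ t ∉ Set.Ioo a b, g t = 0 := by
    intro t ht
    have h5 := hg_le t
    simp only [hfnn, Set.indicator_of_notMem ht] at h5
    exact le_antisymm h5 zero_le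
  have hg_bd : ∀ t, ((g t : ℝ≥0∞)) ≤ min (η t) (k : ℝ≥0∞) := by
    intro t
    by_cases ht : t ∈ Set.Ioo a b
    · have h1 : ((g t : ℝ≥0∞)) ≤ ((fnn t : ℝ≥0∞)) := by exact_mod_cast hg_le t
      simp only [hfnn, Set.indicator_of_mem ht] at h1
      rwa [ENNReal.coe_toNNReal (hmin_ne_top t)] at h1
    · rw [hg_zero t ht]; simp
  have hg_real_bd : ∀ t, ((g t : ℝ)) ≤ (k:ℝ) := by
    intro t
    have h1 : ((g t : ℝ≥0∞)) ≤ (k : ℝ≥0∞) := le_trans (hg_bd t) (min_le_right _ _)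
    exact_mod_cast h1
  have hg_meas : Measurable g := hg_usc.measurable
  set gr : ℝ → ℝ := fun t => ((g t : ℝ)) with hgr
  have hgr_meas : Measurable gr := measurable_coe_nnreal_real.comp hg_meas
  have hgr_nonneg : ∀ t, 0 ≤ gr t := fun t => (g t).coe_nonneg
  have hgr_zero : ∀ t ∉ Set.Ioo a b, gr t = 0 := by
    intro t ht; rw [hgr]; simp only [hg_zero t ht, NNReal.coe_zero]
  -- integrability
  have hgr_intOn : IntegrableOn gr (Set.Ioo a b) volume := by
    apply Integrable.mono' (g := fun _ => (k:ℝ))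
    · exact (integrableOn_const_iff (C := (k:ℝ))).mpr (Or.inr (by rw [Real.volume_Ioo]; exact ENNReal.ofReal_lt_top))
    · exact hgr_meas.aestronglyMeasurable
    · exact Filter.Eventually.of_forall fun t => by
        rw [Real.norm_eq_abs, abs_of_nonneg (hgr_nonneg t)]; exact hg_real_bd t
  have hgr_intbl : Integrable gr volume := by
    have heq : gr = (Set.Ioo a b).indicator gr := by
      funext t
      by_cases ht : t ∈ Set.Ioo a b
      · rw [Set.indicator_of_mem ht]
      · rw [Set.indicator_of_notMem ht, hgr_zero t ht]
    rw [heq]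
    exact (integrable_indicator_iff measurableSet_Ioo).mpr hgr_intOn
  have hgr_ii : ∀ c d : ℝ, IntervalIntegrable gr volume c d :=
    fun c d => hgr_intbl.intervalIntegrable
  -- the primitive G and its properties
  set G : ℝ → ℝ := fun r => ∫ t in a..r, gr t with hG
  have hGcont : Continuous G := intervalIntegral.continuous_primitive hgr_ii a
  have hG_sub : ∀ r s : ℝ, G s - G r = ∫ t in r..s, gr t := by
    intro r s
    exact intervalIntegral.integral_interval_sub_left (hgr_ii a s) (hgr_ii a r)
  have hGmono : Monotone G := by
    intro r s hrs
    have h1 : 0 ≤ ∫ t in r..s, gr t :=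
      intervalIntegral.integral_nonneg hrs (fun t _ => hgr_nonneg t)
    have := hG_sub r s
    linarith
  have hG_le_a : ∀ r, r ≤ a → G r = 0 := by
    intro r hr
    have h1 : (∫ t in r..a, gr t) = 0 := by
      have hEq : Set.EqOn gr (fun _ => (0:ℝ)) (Set.uIcc r a) := by
        intro s hs
        rw [Set.uIcc_of_le hr] at hs
        exact hgr_zero s (fun hmem => absurd hs.2 (not_le.mpr hmem.1))
      exact (intervalIntegral.integral_congr hEq).trans intervalIntegral.integral_zero
    have h2 := hG_sub r a
    have h3 : G a = 0 := by
      simp only [hG]; simp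
    rw [h1] at h2
    linarith
  set J : ℝ := G b with hJ
  have hG_ge_b : ∀ r, b ≤ r → G r = J := by
    intro r hr
    have h1 : (∫ t in b..r, gr t) = 0 := by
      have hEq : Set.EqOn gr (fun _ => (0:ℝ)) (Set.uIcc b r) := by
        intro s hs
        rw [Set.uIcc_of_le hr] at hs
        exact hgr_zero s (fun hmem => absurd hs.1 (not_le.mpr hmem.2))
      exact (intervalIntegral.integral_congr hEq).trans intervalIntegral.integral_zero
    have h2 := hG_sub b r
    rw [h1] at h2
    rw [hJ]
    linarith
  -- J > 1 - ε
  have hab : a < b := by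
    by_contra hab
    push_neg at hab
    have hempty : Set.Ioo a b = ∅ := Set.Ioo_eq_empty (not_lt.mpr hab)
    have hzero : ∀ t, Fk k t = 0 := by
      intro t
      rw [← hfnn_eq t]
      simp only [hfnn, hempty]
      simp
    rw [lintegral_congr hzero] at hk
    simp only [lintegral_zero] at hk
    exact absurd hk (by simp [ENNReal.ofReal_pos.mpr (by linarith : (0:ℝ) < 1 - ε/2)])
  have hJ_lint : ENNReal.ofReal J = ∫⁻ t, (g t : ℝ≥0∞) := by
    have h1 : J = ∫ t in Set.Ioc a b, gr t := by
      simp only [hJ, hG]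
      rw [intervalIntegral.integral_of_le hab.le]
    have h2 : ENNReal.ofReal (∫ t in Set.Ioc a b, gr t) = ∫⁻ t in Set.Ioc a b, ENNReal.ofReal (gr t) :=
      ofReal_integral_eq_lintegral_ofReal hgr_intbl.integrableOn
        (Filter.Eventually.of_forall fun t => hgr_nonneg t)
    have h3 : ∀ t, ENNReal.ofReal (gr t) = (g t : ℝ≥0∞) := by
      intro t; rw [hgr]; exact ENNReal.ofReal_coe_nnreal
    have h4 : (fun t => (g t : ℝ≥0∞)) = (Set.Ioc a b).indicator (fun t => (g t : ℝ≥0∞)) := by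
      funext t
      by_cases ht : t ∈ Set.Ioc a b
      · rw [Set.indicator_of_mem ht]
      · rw [Set.indicator_of_notMem ht]
        have : t ∉ Set.Ioo a b := fun hmem => ht (Set.Ioo_subset_Ioc_self hmem)
        rw [hg_zero t this]; simp
    rw [h1, h2]
    conv_rhs => rw [h4]
    rw [lintegral_indicator measurableSet_Ioc]
    apply setLIntegral_congr_fun measurableSet_Ioc
    exact fun t _ => h3 t
  have hJ_gt : 1 - ε < J := by
    have h1 : ENNReal.ofReal (1 - ε/2) < (∫⁻ t, (g t : ℝ≥0∞)) + ENNReal.ofReal (ε/2) := by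
      calc ENNReal.ofReal (1 - ε/2) < ∫⁻ t, Fk k t := hk
        _ = ∫⁻ t, (fnn t : ℝ≥0∞) := hFk_int_eq.symm
        _ ≤ (∫⁻ t, (g t : ℝ≥0∞)) + ENNReal.ofReal (ε/2) := hg_int
    by_contra hcon
    push_neg at hcon
    have h2 : ENNReal.ofReal J ≤ ENNReal.ofReal (1 - ε) := ENNReal.ofReal_le_ofReal hcon
    rw [hJ_lint] at h2
    have h3 : ENNReal.ofReal (1 - ε/2) < ENNReal.ofReal (1 - ε) + ENNReal.ofReal (ε/2) :=
      lt_of_lt_of_le h1 (add_le_add_left h2 _)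
    rw [← ENNReal.ofReal_add (by linarith) (by linarith)] at h3
    have h4 : (1 - ε) + ε/2 = 1 - ε/2 := by ring
    rw [h4] at h3
    exact lt_irrefl _ h3
  have hJ_pos : 0 < J := lt_of_lt_of_le (by linarith) hJ_gt.le
  -- the test function u
  set u : EuclideanSpace ℝ (Fin n) → ℝ := fun y => min 1 (J⁻¹ * G (dist y y₀)) with hu
  have hucont : Continuous u :=
    continuous_const.min (continuous_const.mul (hGcont.comp (continuous_id.dist continuous_const)))
  have hu0 : ∀ y : EuclideanSpace ℝ (Fin n), dist y y₀ < a → u y = 0 := by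
    intro y hy
    rw [hu]
    simp only []
    rw [hG_le_a _ hy.le, mul_zero]
    exact min_eq_right zero_le_one
  have hu1 : ∀ y : EuclideanSpace ℝ (Fin n), b < dist y y₀ → u y = 1 := by
    intro y hy
    rw [hu]
    simp only []
    rw [hG_ge_b _ hy.le, inv_mul_cancel₀ hJ_pos.ne']
    exact min_self 1
  -- the Lipschitz/gradient bound
  have hlip_bound : ∀ x : EuclideanSpace ℝ (Fin n),
      ‖fderiv ℝ u x‖ ≤ J⁻¹ * ((g (dist x y₀) : ℝ)) := by
    intro x
    by_cases hd : DifferentiableAt ℝ u x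
    · refine le_of_forall_pos_le_add fun ε' hε' => ?_
      set r := dist x y₀ with hr
      have hJε' : 0 < J * ε' := mul_pos hJ_pos hε'
      set t : ℝ≥0 := g r + Real.toNNReal (J * ε') with ht
      have htgt : g r < t := by
        rw [ht]
        exact lt_add_of_pos_right _ (Real.toNNReal_pos.mpr hJε')
      have husc := hg_usc r t htgt
      rw [Metric.eventually_nhds_iff] at husc
      obtain ⟨ρ, hρ, hball⟩ := husc
      have hlip : ∀ᶠ z in nhds x, ‖u z - u x‖ ≤ (J⁻¹ * (t:ℝ)) * ‖z - x‖ := by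
        filter_upwards [Metric.ball_mem_nhds x hρ] with z hz
        set dz := dist z y₀ with hdz
        have hdiff : |dz - r| ≤ dist z x := abs_dist_sub_le z x y₀
        have hdiff' : |dz - r| < ρ := lt_of_le_of_lt hdiff hz
        have step2 : |G dz - G r| ≤ (t:ℝ) * |dz - r| := by
          have hGsub := hG_sub r dz
          have hb : ∀ s ∈ Set.uIoc r dz, ‖gr s‖ ≤ (t:ℝ) := by
            intro s hs
            have hs1 : min r dz ≤ s := le_of_lt hs.1
            have hs2 : s ≤ max r dz := hs.2
            have habs : |s - r| ≤ |dz - r| := by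
              rw [abs_le]
              constructor
              · have h1 : r - |dz - r| ≤ min r dz := by
                  rcases le_total r dz with h | h
                  · rw [min_eq_left h]; have := abs_nonneg (dz - r); linarith
                  · rw [min_eq_right h, abs_of_nonpos (by linarith)]; linarith
                linarith
              · have h1 : max r dz ≤ r + |dz - r| := by
                  rcases le_total r dz with h | h
                  · rw [max_eq_right h]; have := le_abs_self (dz - r); linarith
                  · rw [max_eq_left h]; have := abs_nonneg (dz - r); linarith
                linarith
            have hsρ : dist s r < ρ := by
              rw [Real.dist_eq]
              exact lt_of_le_of_lt habs hdiff'
            have := hball hsρ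
            rw [Real.norm_eq_abs, abs_of_nonneg (hgr_nonneg s)]
            exact le_of_lt (by exact_mod_cast this)
          have h1 := intervalIntegral.norm_integral_le_of_norm_le_const hb
          rw [← hGsub] at h1
          rw [Real.norm_eq_abs] at h1
          exact h1
        calc ‖u z - u x‖ = |min 1 (J⁻¹ * G dz) - min 1 (J⁻¹ * G r)| := by
              rw [Real.norm_eq_abs, hu]
          _ ≤ |J⁻¹ * G dz - J⁻¹ * G r| := min_one_lip _ _
          _ = J⁻¹ * |G dz - G r| := by
              rw [← mul_sub, abs_mul, abs_of_nonneg (inv_nonneg.mpr hJ_pos.le)]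
          _ ≤ J⁻¹ * ((t:ℝ) * |dz - r|) := by
              apply mul_le_mul_of_nonneg_left step2 (inv_nonneg.mpr hJ_pos.le)
          _ ≤ J⁻¹ * ((t:ℝ) * ‖z - x‖) := by
              apply mul_le_mul_of_nonneg_left _ (inv_nonneg.mpr hJ_pos.le)
              apply mul_le_mul_of_nonneg_left _ (t.coe_nonneg)
              rw [← dist_eq_norm]
              exact hdiff
          _ = (J⁻¹ * (t:ℝ)) * ‖z - x‖ := by ring
      have hK : 0 ≤ J⁻¹ * (t:ℝ) := mul_nonneg (inv_nonneg.mpr hJ_pos.le) t.coe_nonneg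
      have hle := hd.hasFDerivAt.le_of_lip' hK hlip
      have htval : (t:ℝ) = (g r : ℝ) + J * ε' := by
        rw [ht]
        push_cast
        rw [Real.coe_toNNReal _ hJε'.le]
      rw [htval] at hle
      calc ‖fderiv ℝ u x‖ ≤ J⁻¹ * ((g r : ℝ) + J * ε') := hle
        _ = J⁻¹ * (g r : ℝ) + J⁻¹ * J * ε' := by ring
        _ = J⁻¹ * (g r : ℝ) + ε' := by rw [inv_mul_cancel₀ hJ_pos.ne', one_mul]
    · rw [fderiv_zero_of_not_differentiableAt hd]
      simp only [norm_zero]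
      exact mul_nonneg (inv_nonneg.mpr hJ_pos.le) (g (dist x y₀)).coe_nonneg
  have hgrad_norm : ∀ x : EuclideanSpace ℝ (Fin n), ‖gradient u x‖ = ‖fderiv ℝ u x‖ := by
    intro x
    show ‖(InnerProductSpace.toDual ℝ (EuclideanSpace ℝ (Fin n))).symm (fderiv ℝ u x)‖ = _
    exact LinearIsometryEquiv.norm_map _ _
  have hgrad : ∀ x : EuclideanSpace ℝ (Fin n),
      ENNReal.ofReal ‖gradient u x‖ ≤ ENNReal.ofReal J⁻¹ * ((g (dist x y₀) : ℝ≥0∞)) := by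
    intro x
    rw [hgrad_norm]
    calc ENNReal.ofReal ‖fderiv ℝ u x‖ ≤ ENNReal.ofReal (J⁻¹ * ((g (dist x y₀) : ℝ))) :=
          ENNReal.ofReal_le_ofReal (hlip_bound x)
      _ = ENNReal.ofReal J⁻¹ * ENNReal.ofReal ((g (dist x y₀) : ℝ)) :=
          ENNReal.ofReal_mul (inv_nonneg.mpr hJ_pos.le)
      _ = ENNReal.ofReal J⁻¹ * ((g (dist x y₀) : ℝ≥0∞)) := by
          rw [ENNReal.ofReal_coe_nnreal]
  -- admissibility of u
  have hcond : CondAdmissible Ω A B u := by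
    refine ⟨hucont, ⟨y₀, ?_⟩, ?_⟩
    · have hball_sub : Metric.ball y₀ a ⊆ interior {y | u y = 0} :=
        interior_maximal (fun y hy => hu0 y (mem_ball.mp hy)) isOpen_ball
      have hcomp : Metric.ball y₀ a ⊆ connectedComponentIn (interior {y | u y = 0}) y₀ :=
        (convex_ball y₀ a).isPreconnected.subset_connectedComponentIn
          (mem_ball_self ha_pos) hball_sub
      exact fun y hy => hcomp (lt_of_le_of_lt (mem_closedBall.mp (hA hy.1)) har₁)
    · obtain ⟨v₀, hv₀⟩ := (isConnected_sphere (by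
        have h1 : Module.finrank ℝ (EuclideanSpace ℝ (Fin n)) = n := finrank_euclideanSpace_fin
        have h2 : ((Module.finrank ℝ (EuclideanSpace ℝ (Fin n)) : Cardinal)) =
            Module.rank ℝ (EuclideanSpace ℝ (Fin n)) := Module.finrank_eq_rank ℝ _
        have h3 : (1:ℕ) < n := by omega
        rw [← h2, h1]
        exact_mod_cast h3)
        (0 : EuclideanSpace ℝ (Fin n)) zero_le_one).nonempty
      have hb_pos : 0 < b := lt_trans (lt_trans hr₁ har₁) hab
      set x₁ : EuclideanSpace ℝ (Fin n) := y₀ + (b+1) • v₀ with hx₁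
      have hx₁_mem : x₁ ∈ {y : EuclideanSpace ℝ (Fin n) | b < dist y y₀} := by
        show b < dist (y₀ + (b+1) • v₀) y₀
        rw [dist_self_add_left, norm_smul, mem_sphere_zero_iff_norm.mp hv₀,
          Real.norm_eq_abs, mul_one, abs_of_pos (by linarith)]
        linarith
      have hS_open : IsOpen {y : EuclideanSpace ℝ (Fin n) | b < dist y y₀} := by
        have : {y : EuclideanSpace ℝ (Fin n) | b < dist y y₀} = (Metric.closedBall y₀ b)ᶜ := by
          ext y; simp [Metric.mem_closedBall, not_le]
        rw [this]
        exact Metric.isClosed_closedBall.isOpen_compl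
      have hS_sub : {y : EuclideanSpace ℝ (Fin n) | b < dist y y₀} ⊆ interior {y | u y = 1} :=
        interior_maximal (fun y hy => hu1 y hy) hS_open
      refine ⟨x₁, fun y hy => ?_⟩
      have hcomp : {y : EuclideanSpace ℝ (Fin n) | b < dist y y₀} ⊆
          connectedComponentIn (interior {y | u y = 1}) x₁ :=
        (isPreconnected_far hn y₀ hb_pos.le).subset_connectedComponentIn hx₁_mem hS_sub
      apply hcomp
      have hy1 : y ∈ (Metric.ball y₀ r₂)ᶜ := hB hy.1
      have : r₂ ≤ dist y y₀ := not_lt.mp (fun h => hy1 (Metric.mem_ball.mpr h))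
      exact lt_of_lt_of_le hbr₂ this
  -- put everything together
  have hann_meas : MeasurableSet (Metric.ball y₀ r₂ \ Metric.closedBall y₀ r₁) :=
    measurableSet_ball.diff measurableSet_closedBall
  have hJc_ne_top : (ENNReal.ofReal J) ^ (-q) ≠ ⊤ := by
    rw [ENNReal.rpow_neg]
    rw [ne_eq, ENNReal.inv_eq_top]
    have : 0 < (ENNReal.ofReal J) ^ q :=
      ENNReal.rpow_pos (ENNReal.ofReal_pos.mpr hJ_pos) ENNReal.ofReal_ne_top
    exact this.ne'
  calc wcapacity q Q A B Ω
      ≤ ∫⁻ x in Ω, Q x * ENNReal.ofReal ‖gradient u x‖ ^ q := iInf₂_le u hcond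
    _ ≤ ∫⁻ x in Ω, (Metric.ball y₀ r₂ \ Metric.closedBall y₀ r₁).indicator
          (fun y => (ENNReal.ofReal J) ^ (-q) * (Q y * (η (dist y y₀)) ^ q)) x := by
        apply lintegral_mono
        intro x
        show Q x * ENNReal.ofReal ‖gradient u x‖ ^ q ≤
          (Metric.ball y₀ r₂ \ Metric.closedBall y₀ r₁).indicator
            (fun y => (ENNReal.ofReal J) ^ (-q) * (Q y * (η (dist y y₀)) ^ q)) x
        by_cases hgx : g (dist x y₀) = 0
        · have h1 : ENNReal.ofReal ‖gradient u x‖ = 0 := by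
            have := hgrad x
            rw [hgx] at this
            simpa using this
          rw [h1, ENNReal.zero_rpow_of_pos hq0, mul_zero]
          exact zero_le
        · have hxio : dist x y₀ ∈ Set.Ioo a b := by
            by_contra hxio
            exact hgx (hg_zero _ hxio)
          have hxann : x ∈ Metric.ball y₀ r₂ \ Metric.closedBall y₀ r₁ := by
            constructor
            · exact Metric.mem_ball.mpr (lt_trans hxio.2 hbr₂)
            · intro hmem
              exact absurd (lt_of_lt_of_le har₁ (le_of_lt hxio.1))
                (not_lt.mpr (mem_closedBall.mp hmem))
          rw [Set.indicator_of_mem hxann]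
          have hcoe : ((g (dist x y₀) : ℝ≥0∞)) ≤ η (dist x y₀) :=
            le_trans (hg_bd _) (min_le_left _ _)
          calc Q x * ENNReal.ofReal ‖gradient u x‖ ^ q
              ≤ Q x * (ENNReal.ofReal J⁻¹ * ((g (dist x y₀) : ℝ≥0∞))) ^ q := by
                apply mul_le_mul_right
                exact ENNReal.rpow_le_rpow (hgrad x) hq0.le
            _ = Q x * ((ENNReal.ofReal J⁻¹) ^ q * ((g (dist x y₀) : ℝ≥0∞)) ^ q) := by
                rw [ENNReal.mul_rpow_of_nonneg _ _ hq0.le]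
            _ ≤ Q x * ((ENNReal.ofReal J⁻¹) ^ q * (η (dist x y₀)) ^ q) := by
                apply mul_le_mul_right
                apply mul_le_mul_right
                exact ENNReal.rpow_le_rpow hcoe hq0.le
            _ = (ENNReal.ofReal J) ^ (-q) * (Q x * (η (dist x y₀)) ^ q) := by
                rw [ENNReal.ofReal_inv_of_pos hJ_pos, ENNReal.inv_rpow, ← ENNReal.rpow_neg]
                ring
    _ = (ENNReal.ofReal J) ^ (-q) *
          ∫⁻ y in (Metric.ball y₀ r₂ \ Metric.closedBall y₀ r₁) ∩ Ω,
            Q y * (η (dist y y₀)) ^ q := by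
        rw [lintegral_indicator hann_meas, Measure.restrict_restrict hann_meas,
          lintegral_const_mul' _ _ hJc_ne_top]
    _ ≤ ENNReal.ofReal (1 - ε) ^ (-q) *
          ∫⁻ y in (Metric.ball y₀ r₂ \ Metric.closedBall y₀ r₁) ∩ Ω,
            Q y * (η (dist y y₀)) ^ q := by
        apply mul_le_mul_left
        rw [ENNReal.rpow_neg, ENNReal.rpow_neg]
        rw [ENNReal.inv_le_inv]
        exact ENNReal.rpow_le_rpow (ENNReal.ofReal_le_ofReal (by linarith)) hq0.le


/-- Theorem th8: a homeomorphism f satisfying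
cap_q(E,F,D) ≤ cap_{q,Q}(f(E),f(F),f(D)) with the weighted capacity equal to the weighted
modulus and the Hesse equality cap_q = M_q, satisfies the inverse Poletsky inequality
(eq2*A) with respect to annuli. -/
theorem inverse_poletsky_from_capacity {n : ℕ} (hn : 2 ≤ n) (q : ℝ) (hq : 1 < q)
    (D D' : Set (EuclideanSpace ℝ (Fin n))) (hDo : IsOpen D) (hD'o : IsOpen D')
    (f g : EuclideanSpace ℝ (Fin n) → EuclideanSpace ℝ (Fin n))
    (hbij : Set.BijOn f D D') (hfc : ContinuousOn f D)
    (hgc : ContinuousOn g D') (hinv : Set.InvOn g f D D')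
    (Q : EuclideanSpace ℝ (Fin n) → ℝ≥0∞) (hQ : Measurable Q)
    (hcap : ∀ A B : Set (EuclideanSpace ℝ (Fin n)), IsCompact A → IsCompact B →
      A ⊆ D → B ⊆ D →
      capacity q A B D ≤ wcapacity q Q (f '' A) (f '' B) (f '' D))
    (hwcm : ∀ A B : Set (EuclideanSpace ℝ (Fin n)), IsCompact A → IsCompact B →
      A ⊆ D → B ⊆ D →
      wcapacity q Q (f '' A) (f '' B) (f '' D) =
        wmodulus q Q (pathFamily (f '' A) (f '' B) (f '' D)) (f '' D))
    (hHesse : ∀ A B : Set (EuclideanSpace ℝ (Fin n)), IsCompact A → IsCompact B →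
      A ⊆ D → B ⊆ D →
      capacity q A B D = modulus q (pathFamily A B D) D) :
    ∀ y₀ ∈ f '' D, ∀ r₁ r₂ : ℝ, 0 < r₁ → r₁ < r₂ →
      ∀ E F : Set (EuclideanSpace ℝ (Fin n)), IsCompact E → IsCompact F →
        E ⊆ D → F ⊆ D →
        E ⊆ f ⁻¹' (Metric.closedBall y₀ r₁) →
        F ⊆ f ⁻¹' (f '' D \ Metric.ball y₀ r₂) →
        ∀ η : ℝ → ℝ≥0∞, Measurable η →
          1 ≤ ∫⁻ r in Set.Ioo r₁ r₂, η r →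
          modulus q (pathFamily E F D) D ≤
            ∫⁻ y in (Metric.ball y₀ r₂ \ Metric.closedBall y₀ r₁) ∩ f '' D,
              Q y * (η (dist y y₀)) ^ q := by
  intro y₀ hy₀ r₁ r₂ hr₁ hr₁₂ E F hE hF hED hFD hEb hFb η hη hint
  rw [← hHesse E F hE hF hED hFD]
  refine le_trans (hcap E F hE hF hED hFD) ?_
  have hEb' : f '' E ⊆ Metric.closedBall y₀ r₁ := by
    rintro _ ⟨x, hx, rfl⟩; exact hEb hx
  have hFb' : f '' F ⊆ (Metric.ball y₀ r₂)ᶜ := by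
    rintro _ ⟨x, hx, rfl⟩; exact (hFb hx).2
  set RHS := ∫⁻ y in (Metric.ball y₀ r₂ \ Metric.closedBall y₀ r₁) ∩ f '' D,
      Q y * (η (dist y y₀)) ^ q with hRHS
  have hkey : ∀ ε : ℝ, 0 < ε → ε < 1 →
      wcapacity q Q (f '' E) (f '' F) (f '' D) ≤ ENNReal.ofReal (1 - ε) ^ (-q) * RHS :=
    fun ε h1 h2 => wcapacity_le_annulus hn q hq Q (f '' E) (f '' F) (f '' D) y₀ r₁ r₂
      hr₁ hr₁₂ hEb' hFb' η hη hint ε h1 h2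
  have h2 : Filter.Tendsto (fun j : ℕ => 1 - 1/((j:ℝ)+2)) Filter.atTop (nhds 1) := by
    have h3 : Filter.Tendsto (fun j : ℕ => 1/((j:ℝ)+2)) Filter.atTop (nhds 0) := by
      have h3a : Filter.Tendsto (fun j : ℕ => ((j:ℝ)+2)) Filter.atTop Filter.atTop :=
        Filter.tendsto_atTop_add_const_right _ 2 tendsto_natCast_atTop_atTop
      simpa [one_div, Pi.inv_def] using h3a.inv_tendsto_atTop
    have := Filter.Tendsto.const_sub (1:ℝ) h3
    simpa using this
  have h4 : Filter.Tendsto (fun j : ℕ => ENNReal.ofReal (1 - 1/((j:ℝ)+2)) ^ (-q) * RHS)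
      Filter.atTop (nhds RHS) := by
    have h5 : Filter.Tendsto (fun j : ℕ => ENNReal.ofReal (1 - 1/((j:ℝ)+2)))
        Filter.atTop (nhds 1) := by
      have := (ENNReal.continuous_ofReal.tendsto 1).comp h2
      simpa [Function.comp_def] using this
    have h6 : Filter.Tendsto (fun j : ℕ => ENNReal.ofReal (1 - 1/((j:ℝ)+2)) ^ (-q))
        Filter.atTop (nhds 1) := by
      have := ((ENNReal.continuous_rpow_const (y := -q)).tendsto 1).comp h5
      simpa [Function.comp_def] using this
    have h7 := ENNReal.Tendsto.mul_const (b := RHS) h6 (Or.inl one_ne_zero)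
    simpa using h7
  refine ge_of_tendsto h4 (Filter.Eventually.of_forall fun j => ?_)
  apply hkey
  · positivity
  · rw [div_lt_one (by positivity)]
    linarith [Nat.cast_nonneg (α := ℝ) j]
end
end
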